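/- The following hold whenever the relevant vertex u_Smax or v_Tmax exists: (i) if L(I)_S ≠ ∅ and u_0 is an ancestor of u_Smax in T, then for every (u,v) ∈ L(I) with u an ancestor of t_i, v is an ancestor of s_{φ(i)}; in particular L(I)_T = ∅. (ii) If L(I)_S ≠ ∅ and u_0 is not an ancestor of u_Smax, then u_0 is not an ancestor of u for any (u,v) ∈ L(I)_S. (iii) If L(I)_T ≠ ∅ and v_0 is an ancestor of v_Tmax in S, then for every (u,v) ∈ L(I) with v an ancestor of s_{φ(i)}, u is an ancestor of t_i; in particular L(I)_S = ∅. (iv) If L(I)_T ≠ ∅ and v_0 is not an ancestor of v_Tmax, then v_0 is not an ancestor of v for any (u,v) ∈ L(I)_T. -/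

import Mathlib

/-!
# Tanglegrams

A rooted binary tree is modelled by the inductive type `BTree`, whose leaves carry
natural-number labels.  Vertices of a tree are identified with the sets of labels of
their leaf descendants (their *clades*): since all leaf labels of the trees occurring
in a tanglegram are distinct, this identification is injective.

A tanglegram of size `n` consists of two rooted binary trees whose leaves are labelled
bijectively by `{0, …, n-1}` together with a permutation `φ` matching leaf `t i` of
the first tree with leaf `s (φ i)` of the second tree.

A layout is recorded by the pair of lists of leaf labels of the two trees, read from
top to bottom; the defining property is that the leaf set of every vertex occupies a
consecutive block.
-/

/-- A rooted binary tree with leaves labelled by natural numbers. -/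
inductive BTree : Type
  | leaf : ℕ → BTree
  | node : BTree → BTree → BTree

namespace BTree

/-- The list of leaf labels of a tree, from left to right. -/
def leafList : BTree → List ℕ
  | .leaf i => [i]
  | .node l r => l.leafList ++ r.leafList

/-- The set of leaf labels of a tree. -/
def leaves (t : BTree) : Finset ℕ := t.leafList.toFinset

/-- `t.Clade s` : `s` is the set of labels of the leaf descendants of some vertex
of `t`. -/
def Clade : BTree → Finset ℕ → Prop
  | .leaf i, s => s = {i}
  | .node l r, s => s = (BTree.node l r).leaves ∨ l.Clade s ∨ r.Clade s

/-- `t.InternalClade s` : `s` is the set of labels of the leaf descendants of some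
*internal* vertex of `t`. -/
def InternalClade : BTree → Finset ℕ → Prop
  | .leaf _, _ => False
  | .node l r, s => s = (BTree.node l r).leaves ∨ l.InternalClade s ∨ r.InternalClade s

/-- `t.NodeClades c c₁ c₂` : some internal vertex of `t` has leaf-label set `c`, and
its two children have leaf-label sets `c₁` and `c₂` (in left-right order). -/
def NodeClades : BTree → Finset ℕ → Finset ℕ → Finset ℕ → Prop
  | .leaf _, _, _, _ => False
  | .node l r, c, c₁, c₂ =>
      (c = (BTree.node l r).leaves ∧ c₁ = l.leaves ∧ c₂ = r.leaves) ∨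
      l.NodeClades c c₁ c₂ ∨ r.NodeClades c c₁ c₂

end BTree

/-- A tanglegram of size `n` : two rooted binary trees `T` and `S` whose leaves are
labelled bijectively by `{0, …, n-1}`, together with a permutation `φ` matching the
leaf of `T` labelled `i` with the leaf of `S` labelled `φ i`.  (The permutation is
normalised to be the identity off `{0, …, n-1}`.) -/
structure Tanglegram (n : ℕ) where
  T : BTree
  S : BTree
  φ : Equiv.Perm ℕ
  hT : T.leafList.Nodup ∧ ∀ i, i ∈ T.leafList ↔ i < n
  hS : S.leafList.Nodup ∧ ∀ i, i ∈ S.leafList ↔ i < n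
  hφ : ∀ i, n ≤ i → φ i = i

/-- The elements of the finite set `s` occur as a consecutive block of the list `X`. -/
def ConsecIn (X : List ℕ) (s : Finset ℕ) : Prop :=
  ∃ l m r : List ℕ, X = l ++ m ++ r ∧ ∀ a, a ∈ m ↔ a ∈ s

/-- `(X, Y)` is a layout of the tanglegram `G` : `X` is an ordering of the leaf labels
of `T`, `Y` one of the leaf labels of `S`, and the leaf set of every vertex of either
tree forms a consecutive block. -/
def IsLayout {n : ℕ} (G : Tanglegram n) (X Y : List ℕ) : Prop :=
  X.Perm G.T.leafList ∧ Y.Perm G.S.leafList ∧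
    (∀ s, G.T.Clade s → ConsecIn X s) ∧ (∀ s, G.S.Clade s → ConsecIn Y s)

/-- The between-tree edges `e i` and `e j` cross in the layout `(X, Y)` :
`t i` precedes `t j` in `X` while `s (φ j)` precedes `s (φ i)` in `Y`. -/
def Crossing {n : ℕ} (G : Tanglegram n) (X Y : List ℕ) (i j : ℕ) : Prop :=
  i < n ∧ j < n ∧ X.idxOf i < X.idxOf j ∧ Y.idxOf (G.φ j) < Y.idxOf (G.φ i)

/-- The number of crossings of the layout `(X, Y)` (each crossing pair of between-tree
edges is counted once, ordered by position in `X`). -/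
def crossCount {n : ℕ} (G : Tanglegram n) (X Y : List ℕ) : ℕ :=
  ((Finset.range n ×ˢ Finset.range n).filter fun p =>
    X.idxOf p.1 < X.idxOf p.2 ∧ Y.idxOf (G.φ p.2) < Y.idxOf (G.φ p.1)).card

/-- A planar layout is a layout with no crossings. -/
def IsPlanarLayout {n : ℕ} (G : Tanglegram n) (X Y : List ℕ) : Prop :=
  IsLayout G X Y ∧ ∀ i j, ¬ Crossing G X Y i j

/-- A tanglegram is planar if it admits a planar layout. -/
def IsPlanarTanglegram {n : ℕ} (G : Tanglegram n) : Prop :=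
  ∃ X Y, IsPlanarLayout G X Y

/-- The crossing number: the minimum number of crossings over all layouts. -/
noncomputable def crt {n : ℕ} (G : Tanglegram n) : ℕ :=
  sInf {c | ∃ X Y, IsLayout G X Y ∧ crossCount G X Y = c}

/-- `(cu, cv)` is a leaf-matched pair of `G` (a pair of internal vertices, recorded by
their leaf-label sets, such that `φ` matches the leaves below the first exactly with
the leaves below the second). -/
def LeafMatchedPair {n : ℕ} (G : Tanglegram n) (cu cv : Finset ℕ) : Prop :=
  G.T.InternalClade cu ∧ G.S.InternalClade cv ∧ cv = cu.image G.φ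

/-- A tanglegram (of size at least 2) is irreducible if its only leaf-matched pair is
the pair of roots. -/
def IrreducibleTanglegram {n : ℕ} (G : Tanglegram n) : Prop :=
  2 ≤ n ∧ ∀ cu cv, LeafMatchedPair G cu cv →
    cu = Finset.range n ∧ cv = Finset.range n

/-- `X'` is obtained from `X` by reversing the consecutive block consisting of the
elements of `s` : the effect on a layout of a flip at the vertex with leaf set `s`. -/
def FlipBlock (s : Finset ℕ) (X X' : List ℕ) : Prop :=
  ∃ l m r : List ℕ, X = l ++ m ++ r ∧ (∀ a, a ∈ m ↔ a ∈ s) ∧ X' = l ++ m.reverse ++ r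

/-- `X'` is obtained from `X` by interchanging the adjacent blocks consisting of the
elements of `s₁` and of `s₂` (occurring in this order), keeping the relative order of
the elements within each block. -/
def SwitchBlock (s₁ s₂ : Finset ℕ) (X X' : List ℕ) : Prop :=
  ∃ l m₁ m₂ r : List ℕ, X = l ++ m₁ ++ m₂ ++ r ∧ (∀ a, a ∈ m₁ ↔ a ∈ s₁) ∧
    (∀ a, a ∈ m₂ ↔ a ∈ s₂) ∧ X' = l ++ m₂ ++ m₁ ++ r

/-- The effect of a subtree switch at an internal vertex whose children have leaf sets
`c₁` and `c₂` (in either order in the layout). -/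
def SwitchAt (c₁ c₂ : Finset ℕ) (X X' : List ℕ) : Prop :=
  SwitchBlock c₁ c₂ X X' ∨ SwitchBlock c₂ c₁ X X'

/-- One paired flip at a leaf-matched pair of `G`, acting on layouts. -/
def PairedFlipStep {n : ℕ} (G : Tanglegram n) (p q : List ℕ × List ℕ) : Prop :=
  ∃ cu cv, LeafMatchedPair G cu cv ∧ FlipBlock cu p.1 q.1 ∧ FlipBlock cv p.2 q.2

/-! ## Induced subtanglegrams

For `I ⊆ {0, …, n-1}`, the induced subtanglegram `(T_I, S_{φ(I)}, φ|_I)` is obtained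
by keeping only the leaves indexed by `I` (resp. `φ(I)`) and suppressing vertices with
a single remaining child.  Its vertices are identified with the vertices of `T`, `S`
that survive, and the clades of `T_I` are exactly the nonempty sets `c ∩ I` for `c` a
clade of `T`. -/

/-- `(A, B)` is a layout of the subtanglegram of `G` induced by `I` : `A` orders the
leaf labels in `I`, `B` those in `φ(I)`, and every clade of the induced subtrees is
consecutive. -/
def IsSubLayout {n : ℕ} (G : Tanglegram n) (I : Finset ℕ) (A B : List ℕ) : Prop :=
  A.Nodup ∧ (∀ a, a ∈ A ↔ a ∈ I) ∧ B.Nodup ∧ (∀ b, b ∈ B ↔ b ∈ I.image G.φ) ∧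
    (∀ c, G.T.Clade c → ConsecIn A (c ∩ I)) ∧
    (∀ c, G.S.Clade c → ConsecIn B (c ∩ I.image G.φ))

/-- A planar layout of the subtanglegram induced by `I` : a layout in which no two of
the between-tree edges indexed by `I` cross. -/
def IsPlanarSubLayout {n : ℕ} (G : Tanglegram n) (I : Finset ℕ) (A B : List ℕ) : Prop :=
  IsSubLayout G I A B ∧ ∀ i ∈ I, ∀ j ∈ I,
    ¬ (A.idxOf i < A.idxOf j ∧ B.idxOf (G.φ j) < B.idxOf (G.φ i))

/-- The subtanglegram of `G` induced by `I` is planar. -/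
def SubPlanar {n : ℕ} (G : Tanglegram n) (I : Finset ℕ) : Prop :=
  ∃ A B, IsPlanarSubLayout G I A B

/-- The layout `(X, Y)` of `G` restricts (deleting the leaves not indexed by `I`,
resp. `φ(I)`) to a planar layout of the subtanglegram induced by `I`. -/
def RestrictsToPlanarSub {n : ℕ} (G : Tanglegram n) (I : Finset ℕ) (X Y : List ℕ) :
    Prop :=
  IsPlanarSubLayout G I (X.filter fun a => decide (a ∈ I))
    (Y.filter fun b => decide (b ∈ I.image G.φ))

/-- The vertex of the tree `t` with leaf set `c` is an internal vertex of the subtree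
induced by `I` : both of its children have leaf descendants indexed by `I` (so it is
neither suppressed nor outside the minimal subtree). -/
def SurvivesInternal (t : BTree) (I : Finset ℕ) (c : Finset ℕ) : Prop :=
  ∃ c₁ c₂, t.NodeClades c c₁ c₂ ∧ (c₁ ∩ I).Nonempty ∧ (c₂ ∩ I).Nonempty

/-- `(cu, cv)` is a member of `L(I)`, the set of leaf-matched pairs of the
subtanglegram induced by `I` : the pair is recorded by the full leaf sets in `T`, `S`
of the two vertices, which are internal vertices of the induced subtrees whose leaf
sets within the subtanglegram are matched by `φ`. -/
def MemLI {n : ℕ} (G : Tanglegram n) (I : Finset ℕ) (cu cv : Finset ℕ) : Prop :=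
  SurvivesInternal G.T I cu ∧ SurvivesInternal G.S (I.image G.φ) cv ∧
    (cu ∩ I).image G.φ = cv ∩ I.image G.φ

/-! ## Single edge insertion: `I = [n] \ {i}`

`u₀` denotes the parent of the leaf `t i` in `T` and `v₀` the parent of the leaf
`s (φ i)` in `S`. -/

/-- `cu₀` is the leaf set of `u₀`, the parent of the leaf labelled `i` in `T`. -/
def IsParentCladeT {n : ℕ} (G : Tanglegram n) (i : ℕ) (cu₀ : Finset ℕ) : Prop :=
  ∃ c, G.T.NodeClades cu₀ {i} c ∨ G.T.NodeClades cu₀ c {i}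

/-- `cv₀` is the leaf set of `v₀`, the parent of the leaf labelled `φ i` in `S`. -/
def IsParentCladeS {n : ℕ} (G : Tanglegram n) (i : ℕ) (cv₀ : Finset ℕ) : Prop :=
  ∃ d, G.S.NodeClades cv₀ {G.φ i} d ∨ G.S.NodeClades cv₀ d {G.φ i}

/-- A subtree switch at `u₀`, the parent of the leaf labelled `i` in `T`. -/
def SwitchAtParentT {n : ℕ} (G : Tanglegram n) (i : ℕ) (X X' : List ℕ) : Prop :=
  ∃ c, (G.T.NodeClades ({i} ∪ c) {i} c ∨ G.T.NodeClades ({i} ∪ c) c {i}) ∧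
    SwitchAt {i} c X X'

/-- A subtree switch at `v₀`, the parent of the leaf labelled `φ i` in `S`. -/
def SwitchAtParentS {n : ℕ} (G : Tanglegram n) (i : ℕ) (Y Y' : List ℕ) : Prop :=
  ∃ d, (G.S.NodeClades ({G.φ i} ∪ d) {G.φ i} d ∨ G.S.NodeClades ({G.φ i} ∪ d) d {G.φ i}) ∧
    SwitchAt {G.φ i} d Y Y'

/-- `(cu, cv) ∈ L(I)_T` for `I = [n] \ {i}` : a leaf-matched pair of the induced
subtanglegram such that `u` is an ancestor of `t i` and `v` is not an ancestor of
`s (φ i)`. -/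
def MemLIT {n : ℕ} (G : Tanglegram n) (i : ℕ) (cu cv : Finset ℕ) : Prop :=
  MemLI G ((Finset.range n).erase i) cu cv ∧ i ∈ cu ∧ G.φ i ∉ cv

/-- `(cu, cv) ∈ L(I)_S` for `I = [n] \ {i}` : a leaf-matched pair of the induced
subtanglegram such that `u` is not an ancestor of `t i` and `v` is an ancestor of
`s (φ i)`. -/
def MemLIS {n : ℕ} (G : Tanglegram n) (i : ℕ) (cu cv : Finset ℕ) : Prop :=
  MemLI G ((Finset.range n).erase i) cu cv ∧ i ∉ cu ∧ G.φ i ∈ cv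

namespace BTree

lemma mem_leaves {t : BTree} {a : ℕ} : a ∈ t.leaves ↔ a ∈ t.leafList := by
  simp [leaves]

lemma leaves_node (l r : BTree) : (node l r).leaves = l.leaves ∪ r.leaves := by
  simp [leaves, leafList]

lemma leaves_nonempty (t : BTree) : t.leaves.Nonempty := by
  induction t with
  | leaf i => exact ⟨i, by simp [leaves, leafList]⟩
  | node l r ihl ihr =>
    obtain ⟨a, ha⟩ := ihl
    exact ⟨a, by rw [leaves_node]; exact Finset.mem_union_left _ ha⟩

lemma clade_leaves (t : BTree) : t.Clade t.leaves := by
  cases t with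
  | leaf i => simp [Clade, leaves, leafList]
  | node l r => exact Or.inl rfl

lemma clade_subset : ∀ {t : BTree} {c : Finset ℕ}, t.Clade c → c ⊆ t.leaves
  | .leaf i, c, h => by
    simp only [Clade] at h
    simp [h, leaves, leafList]
  | .node l r, c, h => by
    rcases h with h | h | h
    · exact h ▸ subset_rfl
    · exact (clade_subset h).trans (by rw [leaves_node]; exact Finset.subset_union_left)
    · exact (clade_subset h).trans (by rw [leaves_node]; exact Finset.subset_union_right)

lemma clade_nonempty : ∀ {t : BTree} {c : Finset ℕ}, t.Clade c → c.Nonempty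
  | .leaf i, c, h => by
    simp only [Clade] at h
    simp [h]
  | .node l r, c, h => by
    rcases h with h | h | h
    · exact h ▸ leaves_nonempty _
    · exact clade_nonempty h
    · exact clade_nonempty h

lemma nodup_node {l r : BTree} (h : (node l r).leafList.Nodup) :
    l.leafList.Nodup ∧ r.leafList.Nodup ∧ Disjoint l.leaves r.leaves := by
  rw [show (node l r).leafList = l.leafList ++ r.leafList from rfl,
    List.nodup_append] at h
  refine ⟨h.1, h.2.1, ?_⟩
  rw [Finset.disjoint_left]
  intro a hal har
  exact h.2.2 a (mem_leaves.mp hal) a (mem_leaves.mp har) rfl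

lemma nodeClades_spec : ∀ {t : BTree} {c c₁ c₂ : Finset ℕ}, t.NodeClades c c₁ c₂ →
    t.Clade c ∧ t.Clade c₁ ∧ t.Clade c₂ ∧ c = c₁ ∪ c₂
  | .leaf _, _, _, _, h => h.elim
  | .node l r, c, c₁, c₂, h => by
    rcases h with ⟨hc, h1, h2⟩ | h | h
    · subst hc; subst h1; subst h2
      exact ⟨Or.inl rfl, Or.inr (Or.inl (clade_leaves l)),
        Or.inr (Or.inr (clade_leaves r)), leaves_node l r⟩
    · obtain ⟨a1, a2, a3, a4⟩ := nodeClades_spec h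
      exact ⟨Or.inr (Or.inl a1), Or.inr (Or.inl a2), Or.inr (Or.inl a3), a4⟩
    · obtain ⟨a1, a2, a3, a4⟩ := nodeClades_spec h
      exact ⟨Or.inr (Or.inr a1), Or.inr (Or.inr a2), Or.inr (Or.inr a3), a4⟩

lemma nodeClades_disj : ∀ {t : BTree}, t.leafList.Nodup → ∀ {c c₁ c₂ : Finset ℕ},
    t.NodeClades c c₁ c₂ → Disjoint c₁ c₂
  | .leaf _, _, _, _, _, h => h.elim
  | .node l r, hn, c, c₁, c₂, h => by
    obtain ⟨hl, hr, hd⟩ := nodup_node hn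
    rcases h with ⟨hc, h1, h2⟩ | h | h
    · subst h1; subst h2; exact hd
    · exact nodeClades_disj hl h
    · exact nodeClades_disj hr h

lemma laminar : ∀ {t : BTree}, t.leafList.Nodup → ∀ {a b : Finset ℕ},
    t.Clade a → t.Clade b → a ⊆ b ∨ b ⊆ a ∨ Disjoint a b
  | .leaf i, _, a, b, ha, hb => by
    simp only [Clade] at ha hb
    subst ha; subst hb
    exact Or.inl subset_rfl
  | .node l r, hn, a, b, ha, hb => by
    obtain ⟨hl, hr, hd⟩ := nodup_node hn
    rcases ha with ha | ha | ha
    · exact Or.inr (Or.inl (ha ▸ clade_subset hb))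
    · rcases hb with hb | hb | hb
      · exact Or.inl (hb ▸ clade_subset (Or.inr (Or.inl ha) : (node l r).Clade a))
      · exact laminar hl ha hb
      · exact Or.inr (Or.inr (Disjoint.mono (clade_subset ha) (clade_subset hb) hd))
    · rcases hb with hb | hb | hb
      · exact Or.inl (hb ▸ clade_subset (Or.inr (Or.inr ha) : (node l r).Clade a))
      · exact Or.inr (Or.inr (Disjoint.mono (clade_subset ha) (clade_subset hb) hd.symm))
      · exact laminar hr ha hb

/-- A clade strictly contained in a node's clade is contained in one of the children. -/
lemma clade_in_child : ∀ {t : BTree}, t.leafList.Nodup → ∀ {c c₁ c₂ a : Finset ℕ},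
    t.NodeClades c c₁ c₂ → t.Clade a → a ⊆ c → a ≠ c → a ⊆ c₁ ∨ a ⊆ c₂
  | .leaf _, _, _, _, _, _, h, _, _, _ => h.elim
  | .node l r, hn, c, c₁, c₂, a, h, ha, hac, hne => by
    obtain ⟨hl, hr, hd⟩ := nodup_node hn
    rcases h with ⟨hc, h1, h2⟩ | h | h
    · subst hc; subst h1; subst h2
      rcases ha with ha | ha | ha
      · exact absurd ha hne
      · exact Or.inl (clade_subset ha)
      · exact Or.inr (clade_subset ha)
    · have hcl : c ⊆ l.leaves := clade_subset (nodeClades_spec h).1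
      rcases ha with ha | ha | ha
      · exfalso
        obtain ⟨z, hz⟩ := leaves_nonempty r
        have hz1 : z ∈ l.leaves := hcl (hac (by
          rw [ha, leaves_node]; exact Finset.mem_union_right _ hz))
        exact Finset.disjoint_left.mp hd hz1 hz
      · exact clade_in_child hl h ha hac hne
      · exfalso
        obtain ⟨z, hz⟩ := clade_nonempty ha
        exact Finset.disjoint_left.mp hd (hcl (hac hz)) (clade_subset ha hz)
    · have hcl : c ⊆ r.leaves := clade_subset (nodeClades_spec h).1
      rcases ha with ha | ha | ha
      · exfalso
        obtain ⟨z, hz⟩ := leaves_nonempty l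
        have hz1 : z ∈ r.leaves := hcl (hac (by
          rw [ha, leaves_node]; exact Finset.mem_union_left _ hz))
        exact Finset.disjoint_left.mp hd hz hz1
      · exfalso
        obtain ⟨z, hz⟩ := clade_nonempty ha
        exact Finset.disjoint_left.mp hd (clade_subset ha hz) (hcl (hac hz))
      · exact clade_in_child hr h ha hac hne

/-- Any clade containing `x`, other than `{x}` itself, contains the
clade of the parent of the leaf `x`. -/
lemma parent_subset {t : BTree} (hTn : t.leafList.Nodup) {x : ℕ} {cu₀ c0 : Finset ℕ}
    (hu₀ : t.NodeClades cu₀ {x} c0 ∨ t.NodeClades cu₀ c0 {x})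
    {a : Finset ℕ} (ha : t.Clade a) (hxa : x ∈ a) (hane : a ≠ {x}) : cu₀ ⊆ a := by
  have hC : t.Clade cu₀ := by
    rcases hu₀ with h | h
    · exact (nodeClades_spec h).1
    · exact (nodeClades_spec h).1
  have hxc0 : x ∉ c0 := by
    rcases hu₀ with h | h
    · exact fun hx => Finset.disjoint_left.mp (nodeClades_disj hTn h)
        (Finset.mem_singleton_self x) hx
    · exact fun hx => Finset.disjoint_left.mp (nodeClades_disj hTn h) hx
        (Finset.mem_singleton_self x)
  have hxcu : x ∈ cu₀ := by
    rcases hu₀ with h | h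
    · rw [(nodeClades_spec h).2.2.2]; exact Finset.mem_union_left _ (by simp)
    · rw [(nodeClades_spec h).2.2.2]; exact Finset.mem_union_right _ (by simp)
  rcases laminar hTn ha hC with hh | hh | hh
  · rcases eq_or_ne a cu₀ with he | he
    · exact he ▸ subset_rfl
    · exfalso
      have hsing : a ⊆ {x} ∨ a ⊆ c0 := by
        rcases hu₀ with h | h
        · exact clade_in_child hTn h ha hh he
        · exact (clade_in_child hTn h ha hh he).symm
      rcases hsing with h1 | h1
      · exact hane (Finset.Subset.antisymm h1 (Finset.singleton_subset_iff.mpr hxa))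
      · exact hxc0 (h1 hxa)
  · exact hh
  · exact absurd hxa (Finset.disjoint_left.mp hh.symm hxcu)

end BTree

open BTree in
/-- Core argument for parts (i) and (iii). -/
lemma core_i (T S : BTree) (ψ : ℕ → ℕ) (hψ : Function.Injective ψ)
    (I J : Finset ℕ) (hTn : T.leafList.Nodup) (hSn : S.leafList.Nodup)
    (x y : ℕ) (hxI : x ∉ I)
    (hSl : S.leaves ⊆ insert y J)
    (cu₀ c0 : Finset ℕ)
    (hu₀ : T.NodeClades cu₀ {x} c0 ∨ T.NodeClades cu₀ c0 {x})
    (cuS cvS : Finset ℕ)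
    (hcuS : SurvivesInternal T I cuS) (hcvS : SurvivesInternal S J cvS)
    (hmatch : (cuS ∩ I).image ψ = cvS ∩ J)
    (hsub : cuS ⊆ cu₀) (hy : y ∈ cvS)
    (a b : Finset ℕ)
    (ha : SurvivesInternal T I a) (hb : SurvivesInternal S J b)
    (hab : (a ∩ I).image ψ = b ∩ J)
    (hxa : x ∈ a) : y ∈ b := by
  obtain ⟨a₁, a₂, hna, ⟨j, hj⟩, _⟩ := ha
  obtain ⟨haC, ha₁C, _, haU⟩ := nodeClades_spec hna
  obtain ⟨e₁, e₂, hne, he₁, he₂⟩ := hcvS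
  obtain ⟨heC, he₁C, he₂C, heU⟩ := nodeClades_spec hne
  obtain ⟨b₁, b₂, hnb, _, _⟩ := hb
  have hbC : S.Clade b := (nodeClades_spec hnb).1
  -- a ≠ {x}
  have hane : a ≠ {x} := by
    intro he
    have hja : j ∈ a := haU ▸ Finset.mem_union_left _ (Finset.mem_inter.mp hj).1
    rw [he, Finset.mem_singleton] at hja
    exact hxI (hja ▸ (Finset.mem_inter.mp hj).2)
  have hcu₀a : cu₀ ⊆ a := parent_subset hTn hu₀ haC hxa hane
  have hsa : cuS ⊆ a := hsub.trans hcu₀a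
  have key : cvS ∩ J ⊆ b ∩ J := by
    rw [← hmatch, ← hab]
    exact Finset.image_subset_image (Finset.inter_subset_inter hsa subset_rfl)
  by_contra hyb
  -- cvS ∩ J nonempty
  have hvJne : (cvS ∩ J).Nonempty := by
    obtain ⟨z, hz⟩ := he₁
    exact ⟨z, Finset.mem_inter.mpr ⟨heU ▸ Finset.mem_union_left _
      (Finset.mem_inter.mp hz).1, (Finset.mem_inter.mp hz).2⟩⟩
  rcases laminar hSn hbC heC with hh | hh | hh
  · -- b ⊆ cvS
    have hbJ : b ⊆ J := by
      intro z hz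
      have := hSl (clade_subset hbC hz)
      rcases Finset.mem_insert.mp this with h1 | h1
      · exact absurd (h1 ▸ hz) hyb
      · exact h1
    have hvb : cvS ∩ J ⊆ b := key.trans Finset.inter_subset_left
    have hbne : b ≠ cvS := fun he => hyb (he ▸ hy)
    rcases clade_in_child hSn hne hbC hh hbne with h1 | h1
    · obtain ⟨z, hz⟩ := he₂
      have hz1 : z ∈ cvS ∩ J := Finset.mem_inter.mpr ⟨heU ▸ Finset.mem_union_right _
        (Finset.mem_inter.mp hz).1, (Finset.mem_inter.mp hz).2⟩
      exact Finset.disjoint_left.mp (nodeClades_disj hSn hne) (h1 (hvb hz1))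
        (Finset.mem_inter.mp hz).1
    · obtain ⟨z, hz⟩ := he₁
      have hz1 : z ∈ cvS ∩ J := Finset.mem_inter.mpr ⟨heU ▸ Finset.mem_union_left _
        (Finset.mem_inter.mp hz).1, (Finset.mem_inter.mp hz).2⟩
      exact Finset.disjoint_left.mp (nodeClades_disj hSn hne)
        (Finset.mem_inter.mp hz).1 (h1 (hvb hz1))
  · exact hyb (hh hy)
  · obtain ⟨z, hz⟩ := hvJne
    exact Finset.disjoint_left.mp hh ((key.trans Finset.inter_subset_left) hz)
      ((Finset.inter_subset_left : cvS ∩ J ⊆ cvS) hz)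

open BTree in
/-- Core argument for parts (ii) and (iv). -/
lemma core_ii (T : BTree) (ψ : ℕ → ℕ) (hψ : Function.Injective ψ)
    (I J : Finset ℕ) (hTn : T.leafList.Nodup)
    (x : ℕ) (cu₀ : Finset ℕ) (hcu₀ : T.Clade cu₀) (hx : x ∈ cu₀)
    (cuS cvS : Finset ℕ) (hcuS : SurvivesInternal T I cuS)
    (hmS : (cuS ∩ I).image ψ = cvS ∩ J)
    (hxS : x ∉ cuS) (hnsub : ¬ cuS ⊂ cu₀)
    (a b : Finset ℕ) (ha : SurvivesInternal T I a)
    (hmab : (a ∩ I).image ψ = b ∩ J)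
    (hbv : b ⊆ cvS) : ¬ a ⊂ cu₀ := by
  intro hac
  obtain ⟨u₁, u₂, hnu, _, _⟩ := hcuS
  have hSC : T.Clade cuS := (nodeClades_spec hnu).1
  have hdisj : Disjoint cuS cu₀ := by
    rcases laminar hTn hSC hcu₀ with hh | hh | hh
    · rcases eq_or_ne cuS cu₀ with he | he
      · exact absurd (he ▸ hx) hxS
      · exact absurd (HasSubset.Subset.ssubset_of_ne hh he) hnsub
    · exact absurd (hh hx) hxS
    · exact hh
  have hsub2 : a ∩ I ⊆ cuS ∩ I := by
    rw [← Finset.image_subset_image_iff hψ, hmS, hmab]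
    exact Finset.inter_subset_inter hbv subset_rfl
  obtain ⟨a₁, a₂, hna, ⟨j, hj⟩, _⟩ := ha
  have hja : j ∈ a ∩ I := Finset.mem_inter.mpr
    ⟨(nodeClades_spec hna).2.2.2 ▸ Finset.mem_union_left _ (Finset.mem_inter.mp hj).1,
      (Finset.mem_inter.mp hj).2⟩
  exact Finset.disjoint_left.mp hdisj (Finset.mem_inter.mp (hsub2 hja)).1
    (hac.subset (Finset.mem_inter.mp hja).1)

/-- (Ancestry in a tree is strict inclusion of clades: the vertex
with leaf set `a` is a strict descendant of the vertex with leaf set `b` iff `a ⊂ b`.)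
(i) If `L(I)_S ≠ ∅` and `u₀` is an ancestor of `u_Smax`, then every `(u,v) ∈ L(I)`
with `u` an ancestor of `t i` has `v` an ancestor of `s (φ i)`; in particular
`L(I)_T = ∅`.  (ii) If `L(I)_S ≠ ∅` and `u₀` is not an ancestor of `u_Smax`, then
`u₀` is not an ancestor of `u` for any `(u,v) ∈ L(I)_S`.  (iii), (iv): the symmetric
statements with the roles of the two trees interchanged. -/
theorem case_order_lemma {n : ℕ} (G : Tanglegram n) (i : ℕ) (hi : i < n)
    (hpl : SubPlanar G ((Finset.range n).erase i))
    (cu₀ cv₀ : Finset ℕ)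
    (hu₀ : IsParentCladeT G i cu₀) (hv₀ : IsParentCladeS G i cv₀) :
    -- (i)
    (∀ cuS cvS, MemLIS G i cuS cvS → (∀ a b, MemLIS G i a b → b ⊆ cvS) →
      cuS ⊂ cu₀ →
      (∀ a b, MemLI G ((Finset.range n).erase i) a b → i ∈ a → G.φ i ∈ b) ∧
      (∀ a b, ¬ MemLIT G i a b)) ∧
    -- (ii)
    (∀ cuS cvS, MemLIS G i cuS cvS → (∀ a b, MemLIS G i a b → b ⊆ cvS) →
      ¬ cuS ⊂ cu₀ →
      ∀ a b, MemLIS G i a b → ¬ a ⊂ cu₀) ∧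
    -- (iii)
    (∀ cuT cvT, MemLIT G i cuT cvT → (∀ a b, MemLIT G i a b → a ⊆ cuT) →
      cvT ⊂ cv₀ →
      (∀ a b, MemLI G ((Finset.range n).erase i) a b → G.φ i ∈ b → i ∈ a) ∧
      (∀ a b, ¬ MemLIS G i a b)) ∧
    -- (iv)
    (∀ cuT cvT, MemLIT G i cuT cvT → (∀ a b, MemLIT G i a b → a ⊆ cuT) →
      ¬ cvT ⊂ cv₀ →
      ∀ a b, MemLIT G i a b → ¬ b ⊂ cv₀) := by
  clear hpl
  obtain ⟨hTn, hTm⟩ := G.hT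
  obtain ⟨hSn, hSm⟩ := G.hS
  set I : Finset ℕ := (Finset.range n).erase i with hIdef
  have hTle : G.T.leaves = Finset.range n := by
    ext a
    rw [BTree.mem_leaves, hTm a, Finset.mem_range]
  have hSle : G.S.leaves = Finset.range n := by
    ext a
    rw [BTree.mem_leaves, hSm a, Finset.mem_range]
  have hiI : i ∉ I := Finset.notMem_erase _ _
  have hyJ : G.φ i ∉ I.image ⇑G.φ := by
    rw [Finset.mem_image]
    rintro ⟨j, hj, hje⟩
    exact hiI (G.φ.injective hje ▸ hj)
  have hinsT : G.T.leaves ⊆ insert i I := by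
    rw [hTle, hIdef, Finset.insert_erase (Finset.mem_range.mpr hi)]
  have hinsS : G.S.leaves ⊆ insert (G.φ i) (I.image ⇑G.φ) := by
    rw [hSle]
    intro m hm
    rw [Finset.mem_range] at hm
    rcases eq_or_ne m (G.φ i) with h | h
    · exact h ▸ Finset.mem_insert_self _ _
    · refine Finset.mem_insert_of_mem (Finset.mem_image.mpr
        ⟨G.φ.symm m, ?_, G.φ.apply_symm_apply m⟩)
      have hsm : G.φ.symm m < n := by
        by_contra hc
        push_neg at hc
        have h2 := G.hφ _ hc
        rw [G.φ.apply_symm_apply] at h2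
        omega
      refine Finset.mem_erase.mpr ⟨fun he => h ?_, Finset.mem_range.mpr hsm⟩
      rw [← he, G.φ.apply_symm_apply]
  obtain ⟨c0, hc0⟩ := hu₀
  obtain ⟨d0, hd0⟩ := hv₀
  have hcu₀C : G.T.Clade cu₀ := by
    rcases hc0 with h | h
    · exact (BTree.nodeClades_spec h).1
    · exact (BTree.nodeClades_spec h).1
  have hicu₀ : i ∈ cu₀ := by
    rcases hc0 with h | h
    · rw [(BTree.nodeClades_spec h).2.2.2]
      exact Finset.mem_union_left _ (Finset.mem_singleton_self i)
    · rw [(BTree.nodeClades_spec h).2.2.2]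
      exact Finset.mem_union_right _ (Finset.mem_singleton_self i)
  have hcv₀C : G.S.Clade cv₀ := by
    rcases hd0 with h | h
    · exact (BTree.nodeClades_spec h).1
    · exact (BTree.nodeClades_spec h).1
  have hicv₀ : G.φ i ∈ cv₀ := by
    rcases hd0 with h | h
    · rw [(BTree.nodeClades_spec h).2.2.2]
      exact Finset.mem_union_left _ (Finset.mem_singleton_self _)
    · rw [(BTree.nodeClades_spec h).2.2.2]
      exact Finset.mem_union_right _ (Finset.mem_singleton_self _)
  have conv : ∀ cu cv : Finset ℕ, (cu ∩ I).image ⇑G.φ = cv ∩ I.image ⇑G.φ →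
      (cv ∩ I.image ⇑G.φ).image ⇑G.φ.symm = cu ∩ I := by
    intro cu cv h
    rw [← h, Finset.image_image]
    simp
  refine ⟨?_, ?_, ?_, ?_⟩
  · -- (i)
    intro cuS cvS hS hmax hsub
    obtain ⟨⟨hcuS, hcvS, hm⟩, hiS, hyS⟩ := hS
    have main : ∀ a b, MemLI G I a b → i ∈ a → G.φ i ∈ b := by
      rintro a b ⟨ha, hb, hab⟩ hia
      exact core_i G.T G.S ⇑G.φ G.φ.injective I (I.image ⇑G.φ) hTn hSn i (G.φ i)
        hiI hinsS cu₀ c0 hc0 cuS cvS hcuS hcvS hm hsub.subset hyS a b ha hb hab hia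
    exact ⟨main, fun a b hT => hT.2.2 (main a b hT.1 hT.2.1)⟩
  · -- (ii)
    intro cuS cvS hS hmax hnsub a b habS
    have hbv : b ⊆ cvS := hmax a b habS
    obtain ⟨⟨hcuS, hcvS, hm⟩, hiS, hyS⟩ := hS
    obtain ⟨⟨ha, hb, hm2⟩, hia, hyb⟩ := habS
    exact core_ii G.T ⇑G.φ G.φ.injective I (I.image ⇑G.φ) hTn i cu₀ hcu₀C hicu₀
      cuS cvS hcuS hm hiS hnsub a b ha hm2 hbv
  · -- (iii)
    intro cuT cvT hT hmax hsub
    obtain ⟨⟨hcuT, hcvT, hm⟩, hiT, hyT⟩ := hT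
    have main : ∀ a b, MemLI G I a b → G.φ i ∈ b → i ∈ a := by
      rintro a b ⟨ha, hb, hab⟩ hyb
      exact core_i G.S G.T ⇑G.φ.symm G.φ.symm.injective (I.image ⇑G.φ) I hSn hTn
        (G.φ i) i hyJ hinsT cv₀ d0 hd0 cvT cuT hcvT hcuT (conv cuT cvT hm)
        hsub.subset hiT b a hb ha (conv a b hab) hyb
    exact ⟨main, fun a b hT' => hT'.2.1 (main a b hT'.1 hT'.2.2)⟩
  · -- (iv)
    intro cuT cvT hT hmax hnsub a b habT
    have hbv : a ⊆ cuT := hmax a b habT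
    obtain ⟨⟨hcuT, hcvT, hm⟩, hiT, hyT⟩ := hT
    obtain ⟨⟨ha, hb, hm2⟩, hia, hyb⟩ := habT
    exact core_ii G.S ⇑G.φ.symm G.φ.symm.injective (I.image ⇑G.φ) I hSn (G.φ i)
      cv₀ hcv₀C hicv₀ cvT cuT hcvT (conv cuT cvT hm) hyT hnsub b a hb
      (conv a b hm2) hbv
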